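/- Let k be a field and q ∈ k*, and let Λ = k_q[x,y] be the quantum plane with q = -1. Then the k-linear map τ exchanging x and y extends to a k-algebra automorphism of Λ, and Aut_k(Λ) is isomorphic to the semidirect product (k*)² ⋊ ⟨τ⟩ where ⟨τ⟩ ≅ ℤ/2 acts by swapping the two factors. -/

import Mathlib

/-- Defining relation of the quantum plane `k_q[x,y]`: `x·y = q·(y·x)`. -/
inductive QPlaneRel (k : Type*) [Field k] (q : k) :
    FreeAlgebra k (Fin 2) → FreeAlgebra k (Fin 2) → Prop
  | rel : QPlaneRel k q (FreeAlgebra.ι k 0 * FreeAlgebra.ι k 1)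
      (q • (FreeAlgebra.ι k 1 * FreeAlgebra.ι k 0))

/-- The quantum plane `k_q[x,y]`. -/
abbrev QPlane (k : Type*) [Field k] (q : k) := RingQuot (QPlaneRel k q)

noncomputable def qpX (k : Type*) [Field k] (q : k) : QPlane k q :=
  RingQuot.mkAlgHom k (QPlaneRel k q) (FreeAlgebra.ι k 0)

noncomputable def qpY (k : Type*) [Field k] (q : k) : QPlane k q :=
  RingQuot.mkAlgHom k (QPlaneRel k q) (FreeAlgebra.ι k 1)

/-- The automorphism of `(kˣ)²` swapping the two factors. -/
def swapAut (k : Type*) [Field k] : MulAut (kˣ × kˣ) :=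
  (MulEquiv.prodComm : kˣ × kˣ ≃* kˣ × kˣ)

/-- The action of `ℤ/2` on `(kˣ)²` by swapping the two factors. -/
def swapHom (k : Type*) [Field k] : Multiplicative (ZMod 2) →* MulAut (kˣ × kˣ) :=
  AddMonoidHom.toMultiplicativeLeft
    (ZMod.lift 2 ⟨zmultiplesHom (Additive (MulAut (kˣ × kˣ))) (Additive.ofMul (swapAut k)),
      by
        show (2 : ℤ) • Additive.ofMul (swapAut k) = 0
        rw [two_zsmul]
        show Additive.ofMul (swapAut k * swapAut k) = 0
        have : swapAut k * swapAut k = 1 := by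
          ext x <;> simp [swapAut, MulAut.mul_apply, MulEquiv.prodComm]
        rw [this]
        rfl⟩)

/-!
The monomials `y ^ i * x ^ j` span `Λ = k_q[x,y]`, and the left regular representation, written
on their formal span, separates them; so they form a basis, and comparing lex-leading monomials
shows that `Λ` is a domain (for `q ≠ 0`) whose units are the nonzero scalars.

Let `φ` be an automorphism. Any algebra map `f` from `Λ` to a commutative domain kills `x` or
`y`, because `f x * f y = q * f x * f y` (here `q = -1 ≠ 1`). Applied to `projX, projY : Λ → k[X]`
(killing `y`, resp. `x`) composed with `φ` and `φ⁻¹`, this shows that `φ` or `τ * φ` maps `x`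
into `ker projY = Λ x` and `y` into `ker projX = Λ y`. If `φ x = u x` and `φ⁻¹ x = u' x`, then
`φ u' * u = 1`, so `u` is a scalar. Hence every automorphism is a scaling `x ↦ a x, y ↦ b y`,
possibly followed by `τ`, which is the semidirect product `(kˣ)² ⋊ ⟨τ⟩`.
-/

def zmodTwoHom {G : Type*} [Group G] (g : G) (hg : g * g = 1) : Multiplicative (ZMod 2) →* G :=
  AddMonoidHom.toMultiplicativeLeft
    (ZMod.lift 2 ⟨zmultiplesHom (Additive G) (Additive.ofMul g), by
      simpa [two_zsmul] using congrArg Additive.ofMul hg⟩)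

lemma Multiplicative.zmodTwo_eq_one_or_eq_ofAdd_one (g : Multiplicative (ZMod 2)) :
    g = 1 ∨ g = .ofAdd 1 := by
  revert g; decide

@[simp] lemma zmodTwoHom_ofAdd_one {G : Type*} [Group G] (g : G) (hg : g * g = 1) :
    zmodTwoHom g hg (Multiplicative.ofAdd 1) = g := by
  simp only [zmodTwoHom, AddMonoidHom.toMultiplicativeLeft_apply_apply, toAdd_ofAdd]
  rw [← Int.cast_one, ZMod.lift_coe]
  simp

lemma swapHom_eq_zmodTwoHom (k : Type*) [Field k] :
    swapHom k = zmodTwoHom (swapAut k) (by ext <;> rfl) :=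
  rfl

noncomputable section

namespace QPlane

variable {k : Type*} [Field k] {q : k}

section Lift

variable {A : Type*} [Semiring A] [Algebra k A]

def lift (u v : A) (h : u * v = q • (v * u)) : QPlane k q →ₐ[k] A :=
  RingQuot.liftAlgHom k ⟨FreeAlgebra.lift k ![u, v], by rintro _ _ ⟨⟩; simpa using h⟩

@[simp] lemma lift_qpX (u v : A) (h : u * v = q • (v * u)) : lift u v h (qpX k q) = u := by
  simp [lift, qpX]

@[simp] lemma lift_qpY (u v : A) (h : u * v = q • (v * u)) : lift u v h (qpY k q) = v := by
  simp [lift, qpY]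

@[ext] lemma algHom_ext {f g : QPlane k q →ₐ[k] A} (hx : f (qpX k q) = g (qpX k q))
    (hy : f (qpY k q) = g (qpY k q)) : f = g := by
  refine RingQuot.ringQuot_ext' k f g (FreeAlgebra.hom_ext (funext fun i => ?_))
  fin_cases i
  exacts [hx, hy]

end Lift

lemma algEquiv_ext {φ ψ : QPlane k q ≃ₐ[k] QPlane k q} (hx : φ (qpX k q) = ψ (qpX k q))
    (hy : φ (qpY k q) = ψ (qpY k q)) : φ = ψ :=
  AlgEquiv.coe_toAlgHom_injective (algHom_ext hx hy)

@[elab_as_elim]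
lemma induction {motive : QPlane k q → Prop} (algebraMap : ∀ r, motive (algebraMap k _ r))
    (qpX : motive (qpX k q)) (qpY : motive (qpY k q))
    (add : ∀ z w, motive z → motive w → motive (z + w))
    (mul : ∀ z w, motive z → motive w → motive (z * w)) (z : QPlane k q) : motive z := by
  obtain ⟨z, rfl⟩ := RingQuot.mkAlgHom_surjective k (QPlaneRel k q) z
  induction z using FreeAlgebra.induction with
  | grade0 r => simpa using algebraMap r
  | grade1 i => fin_cases i; exacts [qpX, qpY]
  | mul z w hz hw => simpa using mul _ _ hz hw
  | add z w hz hw => simpa using add _ _ hz hw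

lemma qpX_mul_qpY : qpX k q * qpY k q = q • (qpY k q * qpX k q) := by
  simpa [qpX, qpY] using RingQuot.mkAlgHom_rel k (QPlaneRel.rel (k := k) (q := q))

lemma qpX_mul_qpY_pow (n : ℕ) : qpX k q * qpY k q ^ n = q ^ n • (qpY k q ^ n * qpX k q) := by
  induction n with
  | zero => simp
  | succ n ih =>
    rw [pow_succ, ← mul_assoc, ih, smul_mul_assoc, mul_assoc, qpX_mul_qpY, mul_smul_comm,
      smul_smul, ← mul_assoc, pow_succ]

section NormalForm

variable (k q) in
def monomial (p : ℕ ×ₗ ℕ) : QPlane k q := qpY k q ^ (ofLex p).1 * qpX k q ^ (ofLex p).2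

lemma qpX_mul_monomial (p : ℕ ×ₗ ℕ) :
    qpX k q * monomial k q p = q ^ (ofLex p).1 • monomial k q (p + toLex (0, 1)) := by
  rw [monomial, ← mul_assoc, qpX_mul_qpY_pow, smul_mul_assoc, mul_assoc, ← pow_succ']
  simp [monomial]

lemma qpY_mul_monomial (p : ℕ ×ₗ ℕ) :
    qpY k q * monomial k q p = monomial k q (p + toLex (1, 0)) := by
  simp only [monomial, ← mul_assoc, ofLex_add, ofLex_toLex, Prod.fst_add, Prod.snd_add,
    add_zero, pow_succ']

lemma span_monomial : Submodule.span k (Set.range (monomial k q)) = ⊤ := by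
  set S := Submodule.span k (Set.range (monomial k q))
  have mem : ∀ p, monomial k q p ∈ S := fun p => Submodule.subset_span ⟨p, rfl⟩
  have mul_mem : ∀ g, (∀ p, g * monomial k q p ∈ S) → ∀ w ∈ S, g * w ∈ S :=
    fun g hg w hw => (Submodule.span_le (p := S.comap (LinearMap.mulLeft k g))).mpr
      (Set.range_subset_iff.mpr hg) hw
  suffices h : ∀ z : QPlane k q, ∀ w ∈ S, z * w ∈ S from
    eq_top_iff.mpr fun z _ => by simpa [monomial] using h z _ (mem 0)
  intro z
  induction z using QPlane.induction with
  | algebraMap r => exact fun w hw => by rw [← Algebra.smul_def]; exact S.smul_mem r hw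
  | qpX => exact mul_mem _ fun p => by rw [qpX_mul_monomial]; exact S.smul_mem _ (mem _)
  | qpY => exact mul_mem _ fun p => by rw [qpY_mul_monomial]; exact mem _
  | add z z' hz hz' => exact fun w hw => by rw [add_mul]; exact S.add_mem (hz w hw) (hz' w hw)
  | mul z z' hz hz' => exact fun w hw => by rw [mul_assoc]; exact hz _ (hz' w hw)

variable (q) in
def shiftX : (ℕ ×ₗ ℕ →₀ k) →ₗ[k] (ℕ ×ₗ ℕ →₀ k) :=
  Finsupp.lsum k fun p => q ^ (ofLex p).1 • Finsupp.lsingle (p + toLex (0, 1))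

variable (k) in
def shiftY : (ℕ ×ₗ ℕ →₀ k) →ₗ[k] (ℕ ×ₗ ℕ →₀ k) :=
  Finsupp.lmapDomain k k (· + toLex (1, 0))

lemma shiftX_single (p : ℕ ×ₗ ℕ) (c : k) :
    shiftX q (Finsupp.single p c) = q ^ (ofLex p).1 • Finsupp.single (p + toLex (0, 1)) c := by
  simp [shiftX]

lemma shiftY_single (p : ℕ ×ₗ ℕ) (c : k) :
    shiftY k (Finsupp.single p c) = Finsupp.single (p + toLex (1, 0)) c := by
  simp [shiftY]

lemma shiftX_pow_single (n : ℕ) (p : ℕ ×ₗ ℕ) (c : k) :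
    (shiftX q ^ n) (Finsupp.single p c)
      = q ^ ((ofLex p).1 * n) • Finsupp.single (p + toLex (0, n)) c := by
  induction n with
  | zero => simp [Prod.mk_zero_zero]
  | succ n ih =>
    rw [pow_succ', Module.End.mul_apply, ih, map_smul, shiftX_single, smul_smul, ← pow_add,
      add_assoc, ← toLex_add]
    simp [mul_add, add_comm]

lemma shiftY_pow_single (n : ℕ) (p : ℕ ×ₗ ℕ) (c : k) :
    (shiftY k ^ n) (Finsupp.single p c) = Finsupp.single (p + toLex (n, 0)) c := by
  induction n with
  | zero => simp [Prod.mk_zero_zero]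
  | succ n ih =>
    rw [pow_succ', Module.End.mul_apply, ih, shiftY_single, add_assoc, ← toLex_add]
    simp

lemma shiftX_mul_shiftY : shiftX q * shiftY k = q • (shiftY k * shiftX q) := by
  refine Finsupp.lhom_ext fun p c => ?_
  simp only [Module.End.mul_apply, LinearMap.smul_apply, shiftX_single, shiftY_single, map_smul,
    smul_smul, ← pow_succ', add_right_comm p]
  simp

/-- Left multiplication, written on coefficients with respect to the monomials `y ^ i * x ^ j`. -/
def regularRep : QPlane k q →ₐ[k] Module.End k (ℕ ×ₗ ℕ →₀ k) :=
  lift (shiftX q) (shiftY k) shiftX_mul_shiftY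

def coeff : QPlane k q →ₗ[k] (ℕ ×ₗ ℕ →₀ k) :=
  (LinearMap.applyₗ (Finsupp.single 0 1)).comp (regularRep (q := q)).toLinearMap

lemma regularRep_monomial_single (p s : ℕ ×ₗ ℕ) (c : k) :
    regularRep (monomial k q p) (Finsupp.single s c)
      = q ^ ((ofLex s).1 * (ofLex p).2) • Finsupp.single (p + s) c := by
  rw [monomial, map_mul, map_pow, map_pow, regularRep, lift_qpX, lift_qpY, Module.End.mul_apply,
    shiftX_pow_single, map_smul, shiftY_pow_single, add_assoc, ← toLex_add]
  congr 2
  simp [add_comm]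

lemma coeff_monomial (p : ℕ ×ₗ ℕ) : coeff (monomial k q p) = Finsupp.single p 1 := by
  simp [coeff, regularRep_monomial_single]

lemma coeff_mul (z w : QPlane k q) : coeff (z * w) = regularRep z (coeff w) := by
  simp [coeff]

lemma coeff_linearCombination (f : ℕ ×ₗ ℕ →₀ k) :
    coeff (Finsupp.linearCombination k (monomial k q) f) = f := by
  have : coeff ∘ₗ Finsupp.linearCombination k (monomial k q) = LinearMap.id :=
    Finsupp.lhom_ext fun p c => by simp [coeff_monomial]
  exact LinearMap.congr_fun this f

lemma linearCombination_coeff (z : QPlane k q) :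
    Finsupp.linearCombination k (monomial k q) (coeff z) = z := by
  obtain ⟨f, rfl⟩ : z ∈ LinearMap.range (Finsupp.linearCombination k (monomial k q)) := by
    simp [Finsupp.range_linearCombination, span_monomial]
  rw [coeff_linearCombination]

lemma coeff_injective : Function.Injective (coeff (k := k) (q := q)) :=
  Function.LeftInverse.injective linearCombination_coeff

lemma coeff_one : coeff (1 : QPlane k q) = Finsupp.single 0 1 := by
  simpa [monomial] using coeff_monomial (k := k) (q := q) 0

instance : Nontrivial (QPlane k q) :=
  ⟨1, 0, fun h => by simpa [coeff_one] using congrArg coeff h⟩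

lemma coeff_mul_apply (z w : QPlane k q) (t : ℕ ×ₗ ℕ) :
    coeff (z * w) t = ∑ p ∈ (coeff z).support, ∑ s ∈ (coeff w).support,
      if p + s = t then coeff z p * coeff w s * q ^ ((ofLex s).1 * (ofLex p).2) else 0 := by
  conv_lhs => rw [coeff_mul, ← linearCombination_coeff z, ← Finsupp.sum_single (coeff w)]
  simp only [Finsupp.linearCombination_apply, Finsupp.sum, map_sum, map_smul, LinearMap.sum_apply,
    LinearMap.smul_apply, regularRep_monomial_single, Finsupp.coe_finsetSum, Finset.sum_apply,
    Finsupp.smul_apply, Finsupp.single_apply, smul_eq_mul]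
  rw [Finset.sum_comm]
  refine Finset.sum_congr rfl fun p _ => Finset.sum_congr rfl fun s _ => ?_
  split_ifs <;> ring

lemma coeff_mul_max'_add_max' {z w : QPlane k q} (hz : (coeff z).support.Nonempty)
    (hw : (coeff w).support.Nonempty) :
    coeff (z * w) ((coeff z).support.max' hz + (coeff w).support.max' hw)
      = coeff z ((coeff z).support.max' hz) * coeff w ((coeff w).support.max' hw)
        * q ^ ((ofLex ((coeff w).support.max' hw)).1 * (ofLex ((coeff z).support.max' hz)).2) := by
  set a := (coeff z).support.max' hz
  set b := (coeff w).support.max' hw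
  have hab : ∀ p ∈ (coeff z).support, ∀ s ∈ (coeff w).support,
      p + s = a + b → p = a ∧ s = b := by
    intro p hp s hs h
    obtain rfl : p = a := (Finset.le_max' _ p hp).eq_of_not_lt fun hlt =>
      h.not_lt (add_lt_add_of_lt_of_le hlt (Finset.le_max' _ s hs))
    exact ⟨rfl, add_left_cancel h⟩
  rw [coeff_mul_apply, Finset.sum_eq_single_of_mem a (Finset.max'_mem _ _),
    Finset.sum_eq_single_of_mem b (Finset.max'_mem _ _), if_pos rfl]
  · exact fun s hs hsb => if_neg fun h => hsb (hab a (Finset.max'_mem _ _) s hs h).2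
  · exact fun p hp hpa => Finset.sum_eq_zero fun s hs => if_neg fun h => hpa (hab p hp s hs h).1

lemma max'_add_max'_mem_support_coeff_mul (hq : q ≠ 0) {z w : QPlane k q}
    (hz : (coeff z).support.Nonempty) (hw : (coeff w).support.Nonempty) :
    (coeff z).support.max' hz + (coeff w).support.max' hw ∈ (coeff (z * w)).support := by
  rw [Finsupp.mem_support_iff, coeff_mul_max'_add_max']
  exact mul_ne_zero (mul_ne_zero (Finsupp.mem_support_iff.mp (Finset.max'_mem _ _))
    (Finsupp.mem_support_iff.mp (Finset.max'_mem _ _))) (pow_ne_zero _ hq)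

lemma support_coeff_nonempty {z : QPlane k q} (hz : z ≠ 0) : (coeff z).support.Nonempty :=
  Finsupp.support_nonempty_iff.mpr fun h => hz (coeff_injective (h.trans (map_zero _).symm))

theorem isDomain (hq : q ≠ 0) : IsDomain (QPlane k q) :=
  have : NoZeroDivisors (QPlane k q) := ⟨fun {z w} h => by
    by_contra! hzw
    simpa [h] using max'_add_max'_mem_support_coeff_mul hq (support_coeff_nonempty hzw.1)
      (support_coeff_nonempty hzw.2)⟩
  NoZeroDivisors.to_isDomain _

lemma eq_algebraMap_of_mul_eq_one (hq : q ≠ 0) {u v : QPlane k q} (h : v * u = 1) :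
    ∃ c : k, u = algebraMap k _ c := by
  have hv : (coeff v).support.Nonempty := support_coeff_nonempty (by rintro rfl; simp_all)
  have hu : (coeff u).support.Nonempty := support_coeff_nonempty (by rintro rfl; simp_all)
  have hmax : (coeff u).support.max' hu = 0 := by
    have := max'_add_max'_mem_support_coeff_mul hq hv hu
    rw [h, coeff_one, Finsupp.support_single _ one_ne_zero, Finset.mem_singleton] at this
    apply_fun ofLex at this ⊢
    simp_all
  refine ⟨coeff u 0, coeff_injective ?_⟩
  rw [Algebra.algebraMap_eq_smul_one, map_smul, coeff_one, Finsupp.smul_single, smul_eq_mul,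
    mul_one, Finsupp.eq_single_iff]
  refine ⟨fun s hs => Finset.mem_singleton.mpr ?_, rfl⟩
  exact le_antisymm (hmax ▸ Finset.le_max' _ s hs) bot_le

end NormalForm

section Projections

open Polynomial

variable (k q) in
def projX : QPlane k q →ₐ[k] k[X] := lift X 0 (by simp)

variable (k q) in
def projY : QPlane k q →ₐ[k] k[X] := lift 0 X (by simp)

@[simp] lemma projX_qpX : projX k q (qpX k q) = X := lift_qpX ..
@[simp] lemma projX_qpY : projX k q (qpY k q) = 0 := lift_qpY ..
@[simp] lemma projY_qpX : projY k q (qpX k q) = 0 := lift_qpX ..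
@[simp] lemma projY_qpY : projY k q (qpY k q) = X := lift_qpY ..

lemma qpX_ne_zero : qpX k q ≠ 0 := fun h =>
  X_ne_zero (R := k) (by simpa using congrArg (projX k q) h)

lemma qpY_ne_zero : qpY k q ≠ 0 := fun h =>
  X_ne_zero (R := k) (by simpa using congrArg (projY k q) h)

lemma exists_qpX_mul_aeval_qpY_eq (p : k[X]) :
    ∃ w, qpX k q * aeval (qpY k q) p = w * qpX k q := by
  induction p using Polynomial.induction_on' with
  | add p p' hp hp' =>
    obtain ⟨w, hw⟩ := hp
    obtain ⟨w', hw'⟩ := hp'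
    exact ⟨w + w', by rw [map_add, mul_add, hw, hw', add_mul]⟩
  | monomial n c =>
    refine ⟨c • q ^ n • qpY k q ^ n, ?_⟩
    rw [aeval_monomial, ← Algebra.smul_def, mul_smul_comm, qpX_mul_qpY_pow, smul_mul_assoc,
      smul_mul_assoc]

lemma exists_eq_mul_qpX_add_aeval_qpY (z : QPlane k q) :
    ∃ (w : QPlane k q) (p : k[X]), z = w * qpX k q + aeval (qpY k q) p := by
  induction z using QPlane.induction with
  | algebraMap r => exact ⟨0, C r, by simp⟩
  | qpX => exact ⟨1, 0, by simp⟩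
  | qpY => exact ⟨0, X, by simp⟩
  | add z z' hz hz' =>
    obtain ⟨w, p, rfl⟩ := hz
    obtain ⟨w', p', rfl⟩ := hz'
    exact ⟨w + w', p + p', by rw [map_add, add_mul]; abel⟩
  | mul z z' hz hz' =>
    obtain ⟨w, p, rfl⟩ := hz
    obtain ⟨w', p', rfl⟩ := hz'
    obtain ⟨v, hv⟩ := exists_qpX_mul_aeval_qpY_eq (q := q) p'
    refine ⟨(w * qpX k q + aeval (qpY k q) p) * w' + w * v, p * p', ?_⟩
    calc _ = (w * qpX k q + aeval (qpY k q) p) * w' * qpX k q + w * (qpX k q * aeval (qpY k q) p')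
          + aeval (qpY k q) p * aeval (qpY k q) p' := by noncomm_ring
      _ = _ := by rw [hv, map_mul]; noncomm_ring

lemma projY_eq_zero_iff {z : QPlane k q} : projY k q z = 0 ↔ ∃ w, z = w * qpX k q := by
  refine ⟨fun hz => ?_, by rintro ⟨w, rfl⟩; simp⟩
  obtain ⟨w, p, rfl⟩ := exists_eq_mul_qpX_add_aeval_qpY z
  refine ⟨w, ?_⟩
  rw [map_add, map_mul, projY_qpX, mul_zero, zero_add, ← aeval_algHom_apply, projY_qpY,
    aeval_X_left_apply] at hz
  simp [hz]

variable {A : Type*} [Semiring A] [Algebra k A]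

lemma eq_aeval_comp_projX {f : QPlane k q →ₐ[k] A} (h : f (qpY k q) = 0) :
    f = (aeval (f (qpX k q))).comp (projX k q) :=
  algHom_ext (by simp) (by simp [h])

lemma eq_aeval_comp_projY {f : QPlane k q →ₐ[k] A} (h : f (qpX k q) = 0) :
    f = (aeval (f (qpY k q))).comp (projY k q) :=
  algHom_ext (by simp [h]) (by simp)

variable {R : Type*} [CommRing R] [IsDomain R] [Algebra k R]

lemma map_qpX_eq_zero_or_map_qpY_eq_zero (hq : q ≠ 1) (f : QPlane k q →ₐ[k] R) :
    f (qpX k q) = 0 ∨ f (qpY k q) = 0 := by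
  have h := congrArg f (qpX_mul_qpY (k := k) (q := q))
  rw [map_mul, map_smul, map_mul, mul_comm (f (qpY k q))] at h
  have h' : (1 - q) • (f (qpX k q) * f (qpY k q)) = 0 := by
    rw [sub_smul, one_smul, ← h, sub_self]
  exact mul_eq_zero.mp ((smul_eq_zero.mp h').resolve_left (sub_ne_zero.mpr hq.symm))

lemma map_eq_zero_of_projX_eq_zero_of_projY_eq_zero (hq : q ≠ 1) (f : QPlane k q →ₐ[k] R)
    {z : QPlane k q} (hX : projX k q z = 0) (hY : projY k q z = 0) : f z = 0 := by
  rcases map_qpX_eq_zero_or_map_qpY_eq_zero hq f with h | h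
  · rw [eq_aeval_comp_projY h, AlgHom.comp_apply, hY, map_zero]
  · rw [eq_aeval_comp_projX h, AlgHom.comp_apply, hX, map_zero]

end Projections

/-- `φ` maps `x` into `ker projY = Λ x` and `y` into `ker projX = Λ y`. -/
def IsDiagonal (φ : QPlane k q ≃ₐ[k] QPlane k q) : Prop :=
  projY k q (φ (qpX k q)) = 0 ∧ projX k q (φ (qpY k q)) = 0

def IsAntidiagonal (φ : QPlane k q ≃ₐ[k] QPlane k q) : Prop :=
  projX k q (φ (qpX k q)) = 0 ∧ projY k q (φ (qpY k q)) = 0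

lemma isDiagonal_or_isAntidiagonal (hq : q ≠ 1) (φ : QPlane k q ≃ₐ[k] QPlane k q) :
    IsDiagonal φ ∨ IsAntidiagonal φ := by
  have hx : ¬ (projX k q (φ (qpX k q)) = 0 ∧ projY k q (φ (qpX k q)) = 0) := fun h => by
    simpa using map_eq_zero_of_projX_eq_zero_of_projY_eq_zero hq
      ((projX k q).comp φ.symm.toAlgHom) h.1 h.2
  have hy : ¬ (projX k q (φ (qpY k q)) = 0 ∧ projY k q (φ (qpY k q)) = 0) := fun h => by
    simpa using map_eq_zero_of_projX_eq_zero_of_projY_eq_zero hq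
      ((projY k q).comp φ.symm.toAlgHom) h.1 h.2
  have h₁ := map_qpX_eq_zero_or_map_qpY_eq_zero hq ((projX k q).comp φ.toAlgHom)
  have h₂ := map_qpX_eq_zero_or_map_qpY_eq_zero hq ((projY k q).comp φ.toAlgHom)
  simp only [AlgHom.comp_apply] at h₁ h₂
  unfold IsDiagonal IsAntidiagonal
  tauto

lemma exists_map_eq_smul (hq : q ≠ 0) (φ : QPlane k q ≃ₐ[k] QPlane k q) {g u u' : QPlane k q}
    (hg : g ≠ 0) (hu : φ g = u * g) (hu' : φ.symm g = u' * g) :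
    ∃ c : kˣ, φ g = (c : k) • g := by
  have := isDomain hq
  have hinv : φ u' * u = 1 := mul_right_cancel₀ hg <| by
    rw [mul_assoc, ← hu, ← map_mul, ← hu', AlgEquiv.apply_symm_apply, one_mul]
  obtain ⟨c, rfl⟩ := eq_algebraMap_of_mul_eq_one hq hinv
  have hc : c ≠ 0 := by rintro rfl; simp_all
  exact ⟨Units.mk0 c hc, by rw [hu, Algebra.smul_def]; rfl⟩

section Scale

lemma smul_qpX_mul_smul_qpY (a b : k) :
    (a • qpX k q) * (b • qpY k q) = q • ((b • qpY k q) * (a • qpX k q)) := by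
  simp only [smul_mul_smul_comm, qpX_mul_qpY, smul_comm q, mul_comm a]

variable (k q) in
def scaleEnd : kˣ × kˣ →* (QPlane k q →ₐ[k] QPlane k q) where
  toFun c := lift ((c.1 : k) • qpX k q) ((c.2 : k) • qpY k q) (smul_qpX_mul_smul_qpY _ _)
  map_one' := algHom_ext (by simp) (by simp)
  map_mul' c d := algHom_ext (by simp [smul_smul, mul_comm]) (by simp [smul_smul, mul_comm])

variable (k q) in
def scale : kˣ × kˣ →* (QPlane k q ≃ₐ[k] QPlane k q) :=
  (AlgEquiv.algHomUnitsEquiv k _).toMonoidHom.comp (scaleEnd k q).toHomUnits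

@[simp] lemma scale_qpX (c : kˣ × kˣ) : scale k q c (qpX k q) = (c.1 : k) • qpX k q := by
  simp [scale, scaleEnd]

@[simp] lemma scale_qpY (c : kˣ × kˣ) : scale k q c (qpY k q) = (c.2 : k) • qpY k q := by
  simp [scale, scaleEnd]

lemma scale_injective : Function.Injective (scale k q) := by
  refine (injective_iff_map_eq_one _).mpr fun c hc => ?_
  have hX := congrArg (fun φ => projX k q (φ (qpX k q))) hc
  have hY := congrArg (fun φ => projY k q (φ (qpY k q))) hc
  simp only [scale_qpX, scale_qpY, map_smul, projX_qpX, projY_qpY, AlgEquiv.one_apply] at hX hY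
  have hX_ne : (Polynomial.X : Polynomial k) ≠ 0 := Polynomial.X_ne_zero
  exact Prod.ext (Units.ext (smul_left_injective k hX_ne (hX.trans (one_smul k _).symm)))
    (Units.ext (smul_left_injective k hX_ne (hY.trans (one_smul k _).symm)))

end Scale

section MinusOne

lemma qpY_mul_qpX : qpY k (-1) * qpX k (-1) = (-1 : k) • (qpX k (-1) * qpY k (-1)) := by
  rw [qpX_mul_qpY, smul_smul, neg_one_mul, neg_neg, one_smul]

variable (k) in
def swap : QPlane k (-1) ≃ₐ[k] QPlane k (-1) :=
  AlgEquiv.ofAlgHom (lift _ _ qpY_mul_qpX) (lift _ _ qpY_mul_qpX)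
    (algHom_ext (by simp) (by simp)) (algHom_ext (by simp) (by simp))

@[simp] lemma swap_qpX : swap k (qpX k (-1)) = qpY k (-1) := lift_qpX ..
@[simp] lemma swap_qpY : swap k (qpY k (-1)) = qpX k (-1) := lift_qpY ..

lemma swap_mul_swap : swap k * swap k = 1 := algEquiv_ext (by simp) (by simp)

@[simp] lemma swap_swap (z : QPlane k (-1)) : swap k (swap k z) = z :=
  AlgEquiv.ext_iff.mp swap_mul_swap z

@[simp] lemma swap_symm : (swap k).symm = swap k :=
  AlgEquiv.ext fun z => by rw [AlgEquiv.symm_apply_eq, swap_swap]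

@[simp] lemma projX_swap (z : QPlane k (-1)) : projX k (-1) (swap k z) = projY k (-1) z :=
  AlgHom.congr_fun (φ₁ := (projX k (-1)).comp (swap k).toAlgHom)
    (algHom_ext (by simp) (by simp)) z

@[simp] lemma projY_swap (z : QPlane k (-1)) : projY k (-1) (swap k z) = projX k (-1) z :=
  AlgHom.congr_fun (φ₁ := (projY k (-1)).comp (swap k).toAlgHom)
    (algHom_ext (by simp) (by simp)) z

lemma projX_eq_zero_iff {z : QPlane k (-1)} : projX k (-1) z = 0 ↔ ∃ w, z = w * qpY k (-1) := by
  rw [← projY_swap, projY_eq_zero_iff]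
  refine ⟨fun ⟨w, hw⟩ => ⟨swap k w, ?_⟩, fun ⟨w, hw⟩ => ⟨swap k w, ?_⟩⟩
  · rw [← swap_swap z, hw, map_mul, swap_qpX]
  · rw [hw, map_mul, swap_qpY]

lemma scale_comp_swapHom (g : Multiplicative (ZMod 2)) :
    (scale k (-1)).comp (swapHom k g).toMonoidHom
      = (MulAut.conj (zmodTwoHom (swap k) swap_mul_swap g)).toMonoidHom.comp (scale k (-1)) := by
  rcases Multiplicative.zmodTwo_eq_one_or_eq_ofAdd_one g with rfl | rfl
  · ext1 c; simp
  · ext1 c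
    refine algEquiv_ext ?_ ?_ <;>
      simp [swapHom_eq_zmodTwoHom, swapAut, AlgEquiv.mul_apply]

variable (k) in
def semidirectHom : (kˣ × kˣ) ⋊[swapHom k] Multiplicative (ZMod 2) →*
    (QPlane k (-1) ≃ₐ[k] QPlane k (-1)) :=
  SemidirectProduct.lift (scale k (-1)) (zmodTwoHom (swap k) swap_mul_swap) scale_comp_swapHom

lemma semidirectHom_apply (x : (kˣ × kˣ) ⋊[swapHom k] Multiplicative (ZMod 2)) :
    semidirectHom k x = scale k (-1) x.left * zmodTwoHom (swap k) swap_mul_swap x.right :=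
  rfl

lemma semidirectHom_injective : Function.Injective (semidirectHom k) := by
  refine (injective_iff_map_eq_one _).mpr fun ⟨c, g⟩ h => ?_
  rw [semidirectHom_apply] at h
  rcases Multiplicative.zmodTwo_eq_one_or_eq_ofAdd_one g with rfl | rfl
  · rw [map_one, mul_one, ← map_one (scale k (-1))] at h
    obtain rfl : c = 1 := scale_injective h
    rfl
  · have hX := congrArg (fun φ => projX k (-1) (φ (qpX k (-1)))) h
    simp [AlgEquiv.mul_apply] at hX
    exact (Polynomial.X_ne_zero hX.symm).elim

variable [NeZero (2 : k)]

lemma isDiagonal_or_isDiagonal_swap_mul (φ : QPlane k (-1) ≃ₐ[k] QPlane k (-1)) :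
    IsDiagonal φ ∨ IsDiagonal (swap k * φ) := by
  have h : (-1 : k) ≠ 1 := fun h => two_ne_zero (α := k) (by linear_combination -h)
  simpa [IsDiagonal, IsAntidiagonal, AlgEquiv.mul_apply] using isDiagonal_or_isAntidiagonal h φ

lemma IsDiagonal.symm {φ : QPlane k (-1) ≃ₐ[k] QPlane k (-1)} (hφ : IsDiagonal φ) :
    IsDiagonal φ.symm := by
  refine (isDiagonal_or_isDiagonal_swap_mul φ.symm).resolve_right fun h => ?_
  obtain ⟨w, hw⟩ := projX_eq_zero_iff.mp (by simpa [AlgEquiv.mul_apply] using h.1)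
  simpa [hφ.2] using congrArg (fun z => projX k (-1) (φ z)) hw

lemma IsDiagonal.exists_scale_eq {φ : QPlane k (-1) ≃ₐ[k] QPlane k (-1)}
    (hφ : IsDiagonal φ) : ∃ c, scale k (-1) c = φ := by
  have hq : (-1 : k) ≠ 0 := neg_ne_zero.mpr one_ne_zero
  obtain ⟨u, hu⟩ := projY_eq_zero_iff.mp hφ.1
  obtain ⟨u', hu'⟩ := projY_eq_zero_iff.mp hφ.symm.1
  obtain ⟨v, hv⟩ := projX_eq_zero_iff.mp hφ.2
  obtain ⟨v', hv'⟩ := projX_eq_zero_iff.mp hφ.symm.2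
  obtain ⟨a, ha⟩ := exists_map_eq_smul hq φ qpX_ne_zero hu hu'
  obtain ⟨b, hb⟩ := exists_map_eq_smul hq φ qpY_ne_zero hv hv'
  exact ⟨(a, b), algEquiv_ext (by simp [ha]) (by simp [hb])⟩

lemma semidirectHom_surjective : Function.Surjective (semidirectHom k) := by
  intro φ
  rcases isDiagonal_or_isDiagonal_swap_mul φ with h | h
  · obtain ⟨c, hc⟩ := h.exists_scale_eq
    exact ⟨.inl c, by rw [semidirectHom, SemidirectProduct.lift_inl, hc]⟩
  · obtain ⟨c, hc⟩ := h.exists_scale_eq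
    refine ⟨.inr (.ofAdd 1) * .inl c, ?_⟩
    rw [map_mul, semidirectHom, SemidirectProduct.lift_inl, SemidirectProduct.lift_inr,
      zmodTwoHom_ofAdd_one, hc, ← mul_assoc, swap_mul_swap, one_mul]

end MinusOne

end QPlane

end

/-- for `q = -1`, the exchange `τ` of `x` and `y` extends to a `k`-algebra
automorphism of the quantum plane, and `Aut_k(Λ) ≅ (kˣ)² ⋊ ⟨τ⟩` with `⟨τ⟩ ≅ ℤ/2`
acting by swapping the two factors. -/
theorem stmt_4 {k : Type*} [Field k] [CharZero k] :
    (∃ τ : QPlane k (-1) ≃ₐ[k] QPlane k (-1),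
      τ (qpX k (-1)) = qpY k (-1) ∧ τ (qpY k (-1)) = qpX k (-1)) ∧
    Nonempty ((QPlane k (-1) ≃ₐ[k] QPlane k (-1)) ≃*
      (kˣ × kˣ) ⋊[swapHom k] Multiplicative (ZMod 2)) :=
  ⟨⟨QPlane.swap k, QPlane.swap_qpX, QPlane.swap_qpY⟩,
    ⟨(MulEquiv.ofBijective _
      ⟨QPlane.semidirectHom_injective, QPlane.semidirectHom_surjective⟩).symm⟩⟩
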